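/- Let V be a normal supervisor on the plant G, let the attack constraint be normal (Σ_{c,A} ⊆ Σ_{o,A}), and suppose AP_dmg ≠ ∅. Then for any enabling attacker A, A is successful if and only if there exists a non-empty set B ⊆ AP_dmg such that L(V_A/G) = L(V/G) ∪ ⋃_{(s,σ)∈B} En(s, σ). -/

import Mathlib

open scoped Classical

namespace ActuatorAttack

variable {A : Type*}

/-- Natural projection onto a sub-alphabet `S`: erase the letters not in `S`. -/
noncomputable def proj (S : Set A) (l : List A) : List A :=
  l.filter (fun a => decide (a ∈ S))

/-- The least language containing `ε` and closed under appending an event `σ`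
allowed by `allow` at `s`, provided the result lies in the plant language `LG`. -/
inductive Lang (LG : Set (List A)) (allow : List A → Set A) : List A → Prop
  | nil : Lang LG allow []
  | snoc {s : List A} {σ : A} : Lang LG allow s → σ ∈ allow s →
      (s ++ [σ]) ∈ LG → Lang LG allow (s ++ [σ])

/-- The closed-loop language `L(V/G)`. -/
def LVG (LG : Set (List A)) (So : Set A) (V : List A → Set A) :
    Set (List A) :=
  {s | Lang LG (fun t => V (proj So t)) s}

/-- Auxiliary function for the attacker-observation map: `pre` is the prefix
of the supervisor observation sequence already processed. -/
noncomputable def phatAux (V : List A → Set A) (SoA : Set A) :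
    List A → List A → List (List A × Set A)
  | _, [] => []
  | pre, σ :: rest =>
      (proj SoA [σ], V (pre ++ [σ])) :: phatAux V SoA (pre ++ [σ]) rest

/-- The attacker-observation map `P̂`: the i-th letter of `P̂(σ₁⋯σₙ)` is
`(P_{o,A}(σᵢ), V(σ₁⋯σᵢ))`. -/
noncomputable def phat (V : List A → Set A) (SoA : Set A) (w : List A) :
    List (List A × Set A) :=
  phatAux V SoA [] w

/-- The attacked supervisor `V_A`. -/
noncomputable def VA (V : List A → Set A) (ScA SoA : Set A)
    (Att : List (List A × Set A) → Set A) (w : List A) : Set A :=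
  (V w \ ScA) ∪ Att (phat V SoA w)

/-- The attacked closed-loop language `L(V_A/G)`. -/
def LVAG (LG : Set (List A)) (So : Set A) (V : List A → Set A)
    (ScA SoA : Set A) (Att : List (List A × Set A) → Set A) : Set (List A) :=
  {s | Lang LG (fun t =>
      {σ | proj So t ∈ proj So '' LVG LG So V ∧
           σ ∈ VA V ScA SoA Att (proj So t)}) s}

/-- An attacker is enabling if it enables every attackable event enabled by
the supervisor. -/
def Enabling (LG : Set (List A)) (So : Set A) (V : List A → Set A)
    (ScA SoA : Set A) (Att : List (List A × Set A) → Set A) : Prop :=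
  ∀ w ∈ proj So '' LVG LG So V, V w ∩ ScA ⊆ Att (phat V SoA w)

/-- An attacker is successful if the attacked closed-loop language meets the
damage set, and everything outside `P_o⁻¹(P_o(L(V/G)))` lies in `L_dmg·Σ*`. -/
def Successful (LG : Set (List A)) (So : Set A) (V : List A → Set A)
    (ScA SoA : Set A) (Att : List (List A × Set A) → Set A)
    (Ldmg : Set (List A)) : Prop :=
  (LVAG LG So V ScA SoA Att ∩ Ldmg).Nonempty ∧
  LVAG LG So V ScA SoA Att \ (proj So ⁻¹' (proj So '' LVG LG So V)) ⊆
    {t | ∃ d ∈ Ldmg, d <+: t}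

/-- `(s, σ)` is an attack pair. -/
def AttackPair (LG : Set (List A)) (So : Set A) (V : List A → Set A)
    (ScA SoA : Set A) (Ldmg : Set (List A)) (s : List A) (σ : A) : Prop :=
  s ∈ LVG LG So V ∧ σ ∈ ScA ∧ s ++ [σ] ∈ Ldmg ∧
  ∀ s' ∈ LVG LG So V,
    phat V SoA (proj So s) = phat V SoA (proj So s') →
    s' ++ [σ] ∈ LG → s' ++ [σ] ∈ Ldmg

/-- `En(s, σ)`: one-step `σ`-extensions in `L(G)` of strings of `L(V/G)` that
are attacker-observation equivalent to `s`. -/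
def En (LG : Set (List A)) (So : Set A) (V : List A → Set A)
    (SoA : Set A) (s : List A) (σ : A) : Set (List A) :=
  {t | ∃ s' ∈ LVG LG So V, t = s' ++ [σ] ∧ t ∈ LG ∧
       phat V SoA (proj So s) = phat V SoA (proj So s')}

/-- `I(ŵ)`: attackable events `σ` such that some string `s'` of `L(V/G)` with
attacker observation `ŵ` forms an attack pair `(s', σ)`. -/
def ISet (LG : Set (List A)) (So : Set A) (V : List A → Set A)
    (ScA SoA : Set A) (Ldmg : Set (List A))
    (w : List (List A × Set A)) : Set A :=
  {σ | σ ∈ ScA ∧ ∃ s' ∈ LVG LG So V,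
        phat V SoA (proj So s') = w ∧ AttackPair LG So V ScA SoA Ldmg s' σ}

/-- The supremal attacker `A^sup`. -/
def Asup (LG : Set (List A)) (So : Set A) (V : List A → Set A)
    (ScA SoA : Set A) (Ldmg : Set (List A))
    (w : List (List A × Set A)) : Set A :=
  {σ | ∃ s ∈ LVG LG So V, phat V SoA (proj So s) = w ∧
        σ ∈ V (proj So s) ∩ ScA} ∪
  ISet LG So V ScA SoA Ldmg w

/-! Since attackable events are observable, an event `σ` that the attacker enables at
`s ∈ L(V/G)` although `V` disables it takes the observation `P_o(sσ)` out of `P_o(L(V/G))`,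
and the attacked supervisor enables nothing afterwards. For an enabling attacker,
`L(V_A/G)` is therefore `L(V/G)` together with the strings `sσ` at such attack steps
`(s, σ)`. The attacker observation `P̂(P_o s)` determines both `V(P_o s)` and the attacker's
decision, so the attack steps sharing the observation of `(s, σ)` produce exactly
`En(s, σ)`; success forces these strings into `L_dmg`, i.e. `(s, σ)` is an attack pair.
Conversely, when `L(V_A/G)` is such a union over attack pairs, every new string lies in
some `En(s, σ) ⊆ L_dmg`. -/

theorem proj_append (S : Set A) (l l' : List A) :
    proj S (l ++ l') = proj S l ++ proj S l' :=
  List.filter_append _ _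

theorem proj_singleton_of_mem {S : Set A} {a : A} (h : a ∈ S) : proj S [a] = [a] := by
  simp [proj, h]

theorem proj_singleton_of_notMem {S : Set A} {a : A} (h : a ∉ S) : proj S [a] = [] := by
  simp [proj, h]

namespace Lang

variable {LG : Set (List A)} {allow allow' : List A → Set A}

theorem of_prefix {s t : List A} (ht : Lang LG allow t) (hst : s <+: t) : Lang LG allow s := by
  induction ht with
  | nil => exact List.prefix_nil.1 hst ▸ Lang.nil
  | snoc hs hσ hG ih =>
    rcases List.prefix_concat_iff.1 hst with rfl | hst
    · exact Lang.snoc hs hσ hG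
    · exact ih hst

theorem mono (h : ∀ s, Lang LG allow s → allow s ⊆ allow' s) {t : List A}
    (ht : Lang LG allow t) : Lang LG allow' t := by
  induction ht with
  | nil => exact Lang.nil
  | snoc hs hσ hG ih => exact Lang.snoc ih (h _ hs hσ) hG

end Lang

section Observation

variable {V : List A → Set A} {SoA : Set A}

theorem V_append_eq_of_phatAux_eq {pre pre' w w' : List A} (hpre : V pre = V pre')
    (h : phatAux V SoA pre w = phatAux V SoA pre' w') : V (pre ++ w) = V (pre' ++ w') := by
  induction w generalizing pre pre' w' with
  | nil =>
    cases w' with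
    | nil => simpa using hpre
    | cons => simp [phatAux] at h
  | cons a w ih =>
    cases w' with
    | nil => simp [phatAux] at h
    | cons b w' =>
      simp only [phatAux, List.cons.injEq, Prod.mk.injEq] at h
      simpa using ih h.1.2 h.2

theorem V_eq_of_phat_eq {w w' : List A} (h : phat V SoA w = phat V SoA w') : V w = V w' := by
  simpa using V_append_eq_of_phatAux_eq rfl h

variable {LG : Set (List A)} {So : Set A}

theorem mem_V_of_proj_eq_append {v w : List A} {σ : A} (hv : v ∈ LVG LG So V)
    (h : proj So v = w ++ [σ]) : σ ∈ V w := by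
  induction hv with
  | nil => simp [proj] at h
  | @snoc s τ _ hτ _ ih =>
    by_cases hτo : τ ∈ So
    · rw [proj_append, proj_singleton_of_mem hτo] at h
      obtain ⟨rfl, hτσ⟩ := List.append_inj' h rfl
      exact (List.singleton_inj.1 hτσ) ▸ hτ
    · rw [proj_append, proj_singleton_of_notMem hτo, List.append_nil] at h
      exact ih h

theorem snoc_notMem_preimage_proj {u : List A} {σ : A} (hσ : σ ∈ So)
    (hnV : σ ∉ V (proj So u)) : u ++ [σ] ∉ proj So ⁻¹' (proj So '' LVG LG So V) := by
  rintro ⟨v, hv, hpv⟩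
  rw [proj_append, proj_singleton_of_mem hσ] at hpv
  exact hnV (mem_V_of_proj_eq_append hv hpv)

end Observation

section AttackedLanguage

variable {LG : Set (List A)} {So : Set A} {V : List A → Set A} {ScA SoA : Set A}
  {Att : List (List A × Set A) → Set A} {Ldmg : Set (List A)}

def attackSteps (LG : Set (List A)) (So : Set A) (V : List A → Set A) (SoA : Set A)
    (Att : List (List A × Set A) → Set A) : Set (List A × A) :=
  {p | p.1 ∈ LVG LG So V ∧ p.2 ∉ V (proj So p.1) ∧ p.2 ∈ Att (phat V SoA (proj So p.1)) ∧
    p.1 ++ [p.2] ∈ LG}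

theorem lvg_subset_lvag (hen : Enabling LG So V ScA SoA Att) :
    LVG LG So V ⊆ LVAG LG So V ScA SoA Att := by
  intro s hs
  refine Lang.mono (fun t ht σ hσ => ?_) hs
  refine ⟨⟨t, ht, rfl⟩, ?_⟩
  by_cases hσA : σ ∈ ScA
  · exact Or.inr (hen _ ⟨t, ht, rfl⟩ ⟨hσ, hσA⟩)
  · exact Or.inl ⟨hσ, hσA⟩

theorem snoc_mem_lvag (hen : Enabling LG So V ScA SoA Att) {s : List A} {σ : A}
    (hs : s ∈ LVG LG So V) (hσ : σ ∈ Att (phat V SoA (proj So s))) (hG : s ++ [σ] ∈ LG) :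
    s ++ [σ] ∈ LVAG LG So V ScA SoA Att :=
  Lang.snoc (lvg_subset_lvag hen hs) ⟨⟨s, hs, rfl⟩, Or.inr hσ⟩ hG

theorem snoc_mem_En {s : List A} {σ : A} (hs : s ∈ LVG LG So V) (hG : s ++ [σ] ∈ LG) :
    s ++ [σ] ∈ En LG So V SoA s σ :=
  ⟨s, hs, rfl, hG, rfl⟩

theorem En_subset_lvag (hen : Enabling LG So V ScA SoA Att) {s : List A} {σ : A}
    (hσ : σ ∈ Att (phat V SoA (proj So s))) :
    En LG So V SoA s σ ⊆ LVAG LG So V ScA SoA Att := by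
  rintro _ ⟨s', hs', rfl, hG, heq⟩
  exact snoc_mem_lvag hen hs' (heq ▸ hσ) hG

theorem AttackPair.En_subset {s : List A} {σ : A}
    (h : AttackPair LG So V ScA SoA Ldmg s σ) : En LG So V SoA s σ ⊆ Ldmg := by
  rintro _ ⟨s', hs', rfl, hG, heq⟩
  exact h.2.2.2 s' hs' heq hG

theorem mem_lvag_cases (hAttSo : ∀ x, Att x ⊆ So) {t : List A}
    (ht : t ∈ LVAG LG So V ScA SoA Att) :
    t ∈ LVG LG So V ∨ ∃ p ∈ attackSteps LG So V SoA Att, t = p.1 ++ [p.2] := by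
  induction ht with
  | nil => exact Or.inl Lang.nil
  | @snoc s σ _ hσ hG ih =>
    obtain ⟨himg, hVA⟩ := hσ
    rcases ih with hs | ⟨⟨u, τ⟩, ⟨-, hnV, hτ, -⟩, rfl⟩
    · by_cases hσV : σ ∈ V (proj So s)
      · exact Or.inl (Lang.snoc hs hσV hG)
      · exact Or.inr ⟨(s, σ), ⟨hs, hσV, hVA.resolve_left (fun h => hσV h.1), hG⟩, rfl⟩
    · exact absurd himg (snoc_notMem_preimage_proj (hAttSo _ hτ) hnV)

theorem lvag_eq_union_En (hen : Enabling LG So V ScA SoA Att) (hAttSo : ∀ x, Att x ⊆ So) :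
    LVAG LG So V ScA SoA Att =
      LVG LG So V ∪ ⋃ p ∈ attackSteps LG So V SoA Att, En LG So V SoA p.1 p.2 := by
  apply subset_antisymm
  · intro t ht
    rcases mem_lvag_cases hAttSo ht with h | ⟨p, hp, rfl⟩
    · exact Or.inl h
    · exact Or.inr (Set.mem_biUnion hp (snoc_mem_En hp.1 hp.2.2.2))
  · refine Set.union_subset (lvg_subset_lvag hen) (Set.iUnion₂_subset fun p hp => ?_)
    exact En_subset_lvag hen hp.2.2.1

theorem mem_attackSteps_of_phat_eq {p : List A × A} (hp : p ∈ attackSteps LG So V SoA Att)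
    {s' : List A} (hs' : s' ∈ LVG LG So V)
    (heq : phat V SoA (proj So p.1) = phat V SoA (proj So s')) (hG : s' ++ [p.2] ∈ LG) :
    (s', p.2) ∈ attackSteps LG So V SoA Att :=
  ⟨hs', V_eq_of_phat_eq heq ▸ hp.2.1, heq ▸ hp.2.2.1, hG⟩

theorem attackSteps_nonempty (hLdV : Ldmg ∩ LVG LG So V = ∅) (hAttSo : ∀ x, Att x ⊆ So)
    (hsucc : Successful LG So V ScA SoA Att Ldmg) : (attackSteps LG So V SoA Att).Nonempty := by
  obtain ⟨t, ht, htd⟩ := hsucc.1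
  rcases mem_lvag_cases hAttSo ht with h | ⟨p, hp, -⟩
  · exact absurd ⟨htd, h⟩ (Set.eq_empty_iff_forall_notMem.1 hLdV t)
  · exact ⟨p, hp⟩

theorem snoc_mem_Ldmg_of_mem_attackSteps (hen : Enabling LG So V ScA SoA Att)
    (hLdV : Ldmg ∩ LVG LG So V = ∅) (hAttSo : ∀ x, Att x ⊆ So)
    (hsucc : Successful LG So V ScA SoA Att Ldmg) {p : List A × A}
    (hp : p ∈ attackSteps LG So V SoA Att) : p.1 ++ [p.2] ∈ Ldmg := by
  obtain ⟨hs, hnV, hσ, hG⟩ := hp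
  obtain ⟨d, hd, hdp⟩ := hsucc.2
    ⟨snoc_mem_lvag hen hs hσ hG, snoc_notMem_preimage_proj (hAttSo _ hσ) hnV⟩
  rcases List.prefix_concat_iff.1 hdp with rfl | hdp
  · exact hd
  · exact absurd ⟨hd, Lang.of_prefix hs hdp⟩ (Set.eq_empty_iff_forall_notMem.1 hLdV d)

theorem attackPair_of_mem_attackSteps (hen : Enabling LG So V ScA SoA Att)
    (hLdV : Ldmg ∩ LVG LG So V = ∅) (hAtt : ∀ x, Att x ⊆ ScA) (hAttSo : ∀ x, Att x ⊆ So)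
    (hsucc : Successful LG So V ScA SoA Att Ldmg) {p : List A × A}
    (hp : p ∈ attackSteps LG So V SoA Att) : AttackPair LG So V ScA SoA Ldmg p.1 p.2 :=
  ⟨hp.1, hAtt _ hp.2.2.1, snoc_mem_Ldmg_of_mem_attackSteps hen hLdV hAttSo hsucc hp,
    fun _ hs' heq hG => snoc_mem_Ldmg_of_mem_attackSteps hen hLdV hAttSo hsucc
      (mem_attackSteps_of_phat_eq hp hs' heq hG)⟩

theorem successful_of_eq_union_En (hLd : Ldmg ⊆ LG) {B : Set (List A × A)} (hB : B.Nonempty)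
    (hBAP : ∀ p ∈ B, AttackPair LG So V ScA SoA Ldmg p.1 p.2)
    (hEq : LVAG LG So V ScA SoA Att = LVG LG So V ∪ ⋃ p ∈ B, En LG So V SoA p.1 p.2) :
    Successful LG So V ScA SoA Att Ldmg := by
  obtain ⟨p, hp⟩ := hB
  obtain ⟨hs, -, hd, -⟩ := hBAP p hp
  refine ⟨⟨p.1 ++ [p.2], hEq ▸ Or.inr (Set.mem_biUnion hp (snoc_mem_En hs (hLd hd))), hd⟩, ?_⟩
  rintro t ⟨ht, htn⟩
  rw [hEq] at ht
  rcases ht with h | h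
  · exact absurd ⟨t, h, rfl⟩ htn
  · obtain ⟨q, hq, htq⟩ := Set.mem_iUnion₂.1 h
    exact ⟨t, (hBAP q hq).En_subset htq, List.prefix_refl t⟩

end AttackedLanguage

theorem stmt_11_general {A : Type*} (So : Set A) (LG : Set (List A))
    (V : List A → Set A)
    (ScA SoA : Set A) (hoA : SoA ⊆ So)
    (hnormA : ScA ⊆ SoA)
    (Ldmg : Set (List A)) (hLd : Ldmg ⊆ LG)
    (hLdV : Ldmg ∩ LVG LG So V = ∅)
    (Att : List (List A × Set A) → Set A) (hAtt : ∀ x, Att x ⊆ ScA)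
    (hen : Enabling LG So V ScA SoA Att) :
    Successful LG So V ScA SoA Att Ldmg ↔
      ∃ B : Set (List A × A), B.Nonempty ∧
        (∀ p ∈ B, AttackPair LG So V ScA SoA Ldmg p.1 p.2) ∧
        LVAG LG So V ScA SoA Att =
          LVG LG So V ∪ ⋃ p ∈ B, En LG So V SoA p.1 p.2 := by
  have hAttSo : ∀ x, Att x ⊆ So := fun x => (hAtt x).trans (hnormA.trans hoA)
  constructor
  · intro hsucc
    exact ⟨attackSteps LG So V SoA Att, attackSteps_nonempty hLdV hAttSo hsucc,
      fun p hp => attackPair_of_mem_attackSteps hen hLdV hAtt hAttSo hsucc hp,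
      lvag_eq_union_En hen hAttSo⟩
  · rintro ⟨B, hB, hBAP, hEq⟩
    exact successful_of_eq_union_En hLd hB hBAP hEq

/-- Suppose `AP_dmg ≠ ∅`. An enabling attacker `A` is
successful iff `L(V_A/G) = L(V/G) ∪ ⋃_{(s,σ)∈B} En(s,σ)` for some
non-empty `B ⊆ AP_dmg`. -/
theorem stmt_11 {A : Type*} [Fintype A] (So Sc : Set A) (LG : Set (List A))
    (hnil : [] ∈ LG) (hpref : ∀ s t : List A, s <+: t → t ∈ LG → s ∈ LG)
    (V : List A → Set A) (hV : ∀ w, Scᶜ ⊆ V w)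
    (hnormV : Sc ⊆ So)
    (ScA SoA : Set A) (hcA : ScA ⊆ Sc) (hoA : SoA ⊆ So)
    (hnormA : ScA ⊆ SoA)
    (Ldmg : Set (List A)) (hLd : Ldmg ⊆ LG)
    (hLdV : Ldmg ∩ LVG LG So V = ∅)
    (hAP : ∃ s σ, AttackPair LG So V ScA SoA Ldmg s σ)
    (Att : List (List A × Set A) → Set A) (hAtt : ∀ x, Att x ⊆ ScA)
    (hen : Enabling LG So V ScA SoA Att) :
    Successful LG So V ScA SoA Att Ldmg ↔
      ∃ B : Set (List A × A), B.Nonempty ∧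
        (∀ p ∈ B, AttackPair LG So V ScA SoA Ldmg p.1 p.2) ∧
        LVAG LG So V ScA SoA Att =
          LVG LG So V ∪ ⋃ p ∈ B, En LG So V SoA p.1 p.2 :=
  stmt_11_general So LG V ScA SoA hoA hnormA Ldmg hLd hLdV Att hAtt hen

end ActuatorAttack
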